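/- arXiv:2102.10057 — 2 statements merged into one kernel-verified Lean document; each statement's English description precedes it below -/
import Mathlib

section
/- Let u ∈ C²(ℝ) satisfy m₀(−u''(ρ) + f(u(ρ))) = λ u'(ρ) for all ρ ∈ ℝ, for constants m₀ > 0 and λ ∈ ℝ, with lim_{ρ→±∞} u(ρ) = ±1, lim_{ρ→±∞} u'(ρ) = 0, and u' ∈ L²(ℝ). Then λ = 0, and consequently −u'' + f(u) = 0 on ℝ. -/
open MeasureTheory Filter Set Topology ENNReal

noncomputable section

open Classical in
/-- Signed distance function to `Γ`, chosen negative inside `Ωm` and positive outside. -/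
def sdist {d : ℕ} (Ωm Γ : Set (EuclideanSpace ℝ (Fin d))) (x : EuclideanSpace ℝ (Fin d)) : ℝ :=
  if x ∈ Ωm then -Metric.infDist x Γ else Metric.infDist x Γ

/-- Euclidean dot product. -/
def dotp {d : ℕ} (a b : EuclideanSpace ℝ (Fin d)) : ℝ := ∑ i, a i * b i

/-- Laplacian in coordinates. -/
def lap {d : ℕ} (f : EuclideanSpace ℝ (Fin d) → ℝ) (x : EuclideanSpace ℝ (Fin d)) : ℝ :=
  ∑ i, fderiv ℝ (fun y => fderiv ℝ f y (EuclideanSpace.single i 1)) x (EuclideanSpace.single i 1)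

/-- Divergence in coordinates. -/
def divg {d : ℕ} (u : EuclideanSpace ℝ (Fin d) → EuclideanSpace ℝ (Fin d))
    (x : EuclideanSpace ℝ (Fin d)) : ℝ :=
  ∑ i, fderiv ℝ (fun y => u y i) x (EuclideanSpace.single i 1)

/-- The contraction `(a ⊗ b) : ∇φ = ∑ i j, aᵢ bⱼ ∂ᵢ φⱼ`. -/
def tensContract {d : ℕ} (a b : EuclideanSpace ℝ (Fin d))
    (φ : EuclideanSpace ℝ (Fin d) → EuclideanSpace ℝ (Fin d)) (x : EuclideanSpace ℝ (Fin d)) : ℝ :=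
  ∑ i, ∑ j, a i * b j * fderiv ℝ (fun y => φ y j) x (EuclideanSpace.single i 1)

/-- Signed distance `d_{Γ₀}` to the initial hypersurface `Γ₀ = ∂Ω₀⁻`, negative inside `Ω₀⁻`. -/
def sd0 {d : ℕ} (Ω₀ : Set (EuclideanSpace ℝ (Fin d))) : EuclideanSpace ℝ (Fin d) → ℝ :=
  sdist Ω₀ (frontier Ω₀)

/-- Signed distance `d_{Γ_t}` to the transported hypersurface `Γ_t = X_t(Γ₀)`,
negative inside `Ω⁻(t) = X_t(Ω₀⁻)`. -/
def sdt {d : ℕ} (Ω₀ : Set (EuclideanSpace ℝ (Fin d)))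
    (X : ℝ → EuclideanSpace ℝ (Fin d) → EuclideanSpace ℝ (Fin d)) (t : ℝ) :
    EuclideanSpace ℝ (Fin d) → ℝ :=
  sdist (X t '' Ω₀) (X t '' frontier Ω₀)

/-- The tubular neighbourhood `Γ₀(δ) = {|d_{Γ₀}| < δ}`. -/
def tube {d : ℕ} (Ω₀ : Set (EuclideanSpace ℝ (Fin d))) (δ : ℝ) :
    Set (EuclideanSpace ℝ (Fin d)) :=
  {y | |sd0 Ω₀ y| < δ}

theorem travelling_wave_speed_is_zero
    (F f : ℝ → ℝ) (hF : ContDiff ℝ (⊤ : ℕ∞) F) (hf : f = deriv F)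
    (hF1 : F 1 = 0) (hFm1 : F (-1) = 0)
    (hf1 : f 1 = 0) (hfm1 : f (-1) = 0)
    (hf'1 : 0 < deriv f 1) (hf'm1 : 0 < deriv f (-1))
    (hfwell : ∀ w ∈ Ioo (-1 : ℝ) 1,
      (∫ s in (-1 : ℝ)..w, f s) = (∫ s in (1 : ℝ)..w, f s) ∧ 0 < ∫ s in (-1 : ℝ)..w, f s)
    (m₀ lam : ℝ) (hm₀ : 0 < m₀)
    (u : ℝ → ℝ) (hu : ContDiff ℝ 2 u)
    (hueq : ∀ ρ : ℝ, m₀ * (-deriv (deriv u) ρ + f (u ρ)) = lam * deriv u ρ)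
    (hutop : Tendsto u atTop (𝓝 1)) (hubot : Tendsto u atBot (𝓝 (-1)))
    (hu'top : Tendsto (deriv u) atTop (𝓝 0)) (hu'bot : Tendsto (deriv u) atBot (𝓝 0))
    (hu'L2 : Integrable fun ρ : ℝ => deriv u ρ ^ 2) :
    lam = 0 ∧ ∀ ρ : ℝ, -deriv (deriv u) ρ + f (u ρ) = 0 := by
  have hm₀' : m₀ ≠ 0 := hm₀.ne'
  have hud : Differentiable ℝ u := hu.differentiable (by norm_num)
  have hu2 : ContDiff ℝ 1 (deriv u) := by
    have h : ContDiff ℝ (1 + 1) u := by norm_num at hu ⊢; exact hu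
    exact (contDiff_succ_iff_deriv.mp h).2.2
  have hu'd : Differentiable ℝ (deriv u) := hu2.differentiable (by norm_num)
  set c := lam / m₀ with hc
  set E : ℝ → ℝ := fun x => deriv u x ^ 2 / 2 - F (u x) with hE
  have hderiv : ∀ x, HasDerivAt E (-c * deriv u x ^ 2) x := by
    intro x
    have h1 : HasDerivAt (fun y => deriv u y ^ 2 / 2)
        (deriv u x * deriv (deriv u) x) x := by
      have h := ((hu'd x).hasDerivAt.pow 2).div_const 2
      exact h.congr_deriv (by simp only [Nat.cast_ofNat, Nat.reduceSub, pow_one]; ring)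
    have hF' : HasDerivAt F (f (u x)) (u x) := by
      rw [hf]; exact (hF.differentiable (by simp) (u x)).hasDerivAt
    have h2 : HasDerivAt (fun y => F (u y)) (f (u x) * deriv u x) x :=
      hF'.comp x (hud x).hasDerivAt
    have key : deriv u x * deriv (deriv u) x - f (u x) * deriv u x = -c * deriv u x ^ 2 := by
      have h := hueq x
      have hdd : deriv (deriv u) x = f (u x) - c * deriv u x := by
        have e : lam / m₀ * deriv u x = -deriv (deriv u) x + f (u x) := by
          rw [div_mul_eq_mul_div, div_eq_iff hm₀', ← h]; ring
        rw [hc]; linarith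
      rw [hdd]; ring
    have h3 := h1.sub h2
    rw [key] at h3
    exact h3
  have hgint : Integrable (fun x : ℝ => -c * deriv u x ^ 2) := hu'L2.const_mul _
  have hEtop : Tendsto E atTop (𝓝 0) := by
    have h1 : Tendsto (fun x => deriv u x ^ 2 / 2) atTop (𝓝 0) := by
      simpa using (hu'top.pow 2).div_const 2
    have h2 : Tendsto (fun x => F (u x)) atTop (𝓝 0) := by
      simpa [hF1, Function.comp_def] using (hF.continuous.tendsto 1).comp hutop
    simpa using h1.sub h2
  have hEbot : Tendsto E atBot (𝓝 0) := by
    have h1 : Tendsto (fun x => deriv u x ^ 2 / 2) atBot (𝓝 0) := by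
      simpa using (hu'bot.pow 2).div_const 2
    have h2 : Tendsto (fun x => F (u x)) atBot (𝓝 0) := by
      simpa [hFm1, Function.comp_def] using (hF.continuous.tendsto (-1)).comp hubot
    simpa using h1.sub h2
  have hIoi : ∫ x in Ioi (0:ℝ), -c * deriv u x ^ 2 = 0 - E 0 :=
    integral_Ioi_of_hasDerivAt_of_tendsto' (fun x _ => hderiv x) hgint.integrableOn hEtop
  have hIic : ∫ x in Iic (0:ℝ), -c * deriv u x ^ 2 = E 0 - 0 :=
    integral_Iic_of_hasDerivAt_of_tendsto' (fun x _ => hderiv x) hgint.integrableOn hEbot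
  have htot : ∫ x : ℝ, -c * deriv u x ^ 2 = 0 := by
    rw [← intervalIntegral.integral_Iic_add_Ioi hgint.integrableOn hgint.integrableOn, hIoi, hIic]; ring
  have hcI : c * ∫ x : ℝ, deriv u x ^ 2 = 0 := by
    have := htot
    rw [integral_const_mul] at this
    linarith
  have hIpos : 0 < ∫ x : ℝ, deriv u x ^ 2 := by
    rcases lt_or_eq_of_le (integral_nonneg (f := fun x => deriv u x ^ 2) fun x => sq_nonneg _) with h | h
    · exact h
    · exfalso
      have hae : (fun x => deriv u x ^ 2) =ᵐ[volume] 0 :=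
        (integral_eq_zero_iff_of_nonneg (fun x => sq_nonneg _) hu'L2).mp h.symm
      have hcont : Continuous fun x => deriv u x ^ 2 := (hu2.continuous).pow 2
      have hzero : ∀ x, deriv u x = 0 := by
        intro x
        have := (hcont.ae_eq_iff_eq volume continuous_const).mp hae
        have hx : deriv u x ^ 2 = 0 := congrFun this x
        exact pow_eq_zero_iff (by norm_num : (2:ℕ) ≠ 0) |>.mp hx
      have hconst : ∀ x, u x = u 0 := fun x => is_const_of_deriv_eq_zero hud hzero x 0
      have h1 : Tendsto (fun _ : ℝ => u 0) atTop (𝓝 1) := hutop.congr hconst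
      have h2 : Tendsto (fun _ : ℝ => u 0) atBot (𝓝 (-1)) := hubot.congr hconst
      have e1 : u 0 = 1 := tendsto_nhds_unique tendsto_const_nhds h1
      have e2 : u 0 = -1 := tendsto_nhds_unique tendsto_const_nhds h2
      linarith
  have hc0 : c = 0 := by
    rcases mul_eq_zero.mp hcI with h | h
    · exact h
    · exact absurd h hIpos.ne'
  have hlam : lam = 0 := by
    rw [hc] at hc0; exact (div_eq_zero_iff.mp hc0).resolve_right hm₀'
  refine ⟨hlam, fun ρ => ?_⟩
  have h := hueq ρ
  rw [hlam] at h
  have := mul_eq_zero.mp (by linarith : m₀ * (-deriv (deriv u) ρ + f (u ρ)) = 0)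
  tauto
end
end

section
/- Let θ₀ be the optimal profile and suppose w ∈ C²(ℝ) is bounded with bounded derivative and solves −w''(ρ) + f'(θ₀(ρ)) w(ρ) = α θ₀'(ρ) for all ρ ∈ ℝ, where α ∈ ℝ is a constant. Then α = 0. (In particular, a bounded solution of the linearized equation −w'' + f'(θ₀)w = g with right-hand side g = α θ₀' can only exist if the compatibility condition ∫_ℝ g(ρ) θ₀'(ρ) dρ = 0 holds.) -/
open MeasureTheory Filter Set Topology ENNReal

noncomputable section

theorem fredholm_compatibility_for_linearized_operator
    (F f : ℝ → ℝ) (hF : ContDiff ℝ (⊤ : ℕ∞) F) (hf : f = deriv F)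
    (hF1 : F 1 = 0) (hFm1 : F (-1) = 0)
    (hf1 : f 1 = 0) (hfm1 : f (-1) = 0)
    (hf'1 : 0 < deriv f 1) (hf'm1 : 0 < deriv f (-1))
    (hfwell : ∀ w ∈ Ioo (-1 : ℝ) 1,
      (∫ s in (-1 : ℝ)..w, f s) = (∫ s in (1 : ℝ)..w, f s) ∧ 0 < ∫ s in (-1 : ℝ)..w, f s)
    -- the optimal profile θ₀ and its properties
    (θ₀ : ℝ → ℝ) (hθ₀reg : ContDiff ℝ 2 θ₀)
    (hθ₀ode : ∀ z : ℝ, -deriv (deriv θ₀) z + f (θ₀ z) = 0)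
    (hθ₀0 : θ₀ 0 = 0)
    (hθ₀top : Tendsto θ₀ atTop (𝓝 1)) (hθ₀bot : Tendsto θ₀ atBot (𝓝 (-1)))
    (hθ₀pos : ∀ z : ℝ, 0 < deriv θ₀ z)
    (hθ₀'top : Tendsto (deriv θ₀) atTop (𝓝 0)) (hθ₀'bot : Tendsto (deriv θ₀) atBot (𝓝 0))
    (hθ₀''top : Tendsto (deriv (deriv θ₀)) atTop (𝓝 0))
    (hθ₀''bot : Tendsto (deriv (deriv θ₀)) atBot (𝓝 0))
    (hθ₀'L2 : Integrable fun z : ℝ => deriv θ₀ z ^ 2)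
    (hθ₀'L2pos : 0 < ∫ z : ℝ, deriv θ₀ z ^ 2)
    -- a bounded solution w of the linearized equation with right-hand side α θ₀'
    (α : ℝ) (w : ℝ → ℝ) (hw : ContDiff ℝ 2 w)
    (M : ℝ) (hwbd : ∀ ρ : ℝ, |w ρ| ≤ M) (hw'bd : ∀ ρ : ℝ, |deriv w ρ| ≤ M)
    (hweq : ∀ ρ : ℝ, -deriv (deriv w) ρ + deriv f (θ₀ ρ) * w ρ = α * deriv θ₀ ρ) :
    α = 0 := by
  -- f is smooth
  have hFi : ContDiff ℝ ((⊤:ℕ∞):WithTop ℕ∞) F := hF.of_le (by simp)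
  have hfC : ContDiff ℝ ((⊤:ℕ∞):WithTop ℕ∞) f := hf ▸ (contDiff_infty_iff_deriv.mp hFi).2
  -- basic differentiability facts
  have hθd : Differentiable ℝ θ₀ := hθ₀reg.differentiable (by norm_num)
  have hθ₀reg' : ContDiff ℝ ((1:WithTop ℕ∞)+1) θ₀ := by exact_mod_cast hθ₀reg
  have hθ'C : ContDiff ℝ 1 (deriv θ₀) := (contDiff_succ_iff_deriv.mp hθ₀reg').2.2
  have hwd : Differentiable ℝ w := hw.differentiable (by norm_num)
  have hw' : ContDiff ℝ ((1:WithTop ℕ∞)+1) w := by exact_mod_cast hw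
  have hw'C : ContDiff ℝ 1 (deriv w) := (contDiff_succ_iff_deriv.mp hw').2.2
  -- θ₀'' = f ∘ θ₀
  have hθ'' : deriv (deriv θ₀) = fun z => f (θ₀ z) := by
    funext z; have := hθ₀ode z; linarith
  set g : ℝ → ℝ := fun ρ => deriv w ρ * deriv θ₀ ρ - w ρ * deriv (deriv θ₀) ρ with hg
  have hgderiv : ∀ ρ : ℝ, HasDerivAt g (-α * (deriv θ₀ ρ)^2) ρ := by
    intro ρ
    have h1 : HasDerivAt w (deriv w ρ) ρ := (hwd ρ).hasDerivAt
    have h2 : HasDerivAt (deriv w) (deriv (deriv w) ρ) ρ :=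
      ((hw'C.differentiable one_ne_zero) ρ).hasDerivAt
    have h3 : HasDerivAt θ₀ (deriv θ₀ ρ) ρ := (hθd ρ).hasDerivAt
    have h4 : HasDerivAt (deriv θ₀) (deriv (deriv θ₀) ρ) ρ :=
      ((hθ'C.differentiable one_ne_zero) ρ).hasDerivAt
    have h5 : HasDerivAt (fun z => f (θ₀ z)) (deriv f (θ₀ ρ) * deriv θ₀ ρ) ρ := by
      have hfd : HasDerivAt f (deriv f (θ₀ ρ)) (θ₀ ρ) :=
        ((hfC.differentiable (by simp)) (θ₀ ρ)).hasDerivAt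
      exact hfd.comp ρ h3
    have h6 : HasDerivAt (deriv (deriv θ₀)) (deriv f (θ₀ ρ) * deriv θ₀ ρ) ρ := by
      rw [hθ'']; exact h5
    have := (h2.mul h4).sub (h1.mul h6)
    refine this.congr_deriv ?_
    linear_combination (-deriv θ₀ ρ) * hweq ρ
  -- fundamental theorem of calculus on [-R, R]
  have hcont : Continuous fun ρ : ℝ => -α * (deriv θ₀ ρ)^2 := by
    have := hθ'C.continuous
    continuity
  have hFTC : ∀ R : ℝ, (∫ ρ in (-R)..R, -α * (deriv θ₀ ρ)^2) = g R - g (-R) := by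
    intro R
    exact intervalIntegral.integral_eq_sub_of_hasDerivAt
      (fun x _ => hgderiv x) (hcont.intervalIntegrable _ _)
  -- limits of g at ±∞
  have hgtop : Tendsto g atTop (𝓝 0) := by
    have h1 : Tendsto (fun ρ => deriv w ρ * deriv θ₀ ρ) atTop (𝓝 0) := by
      refine squeeze_zero_norm (a := fun ρ => M * |deriv θ₀ ρ|) ?_ ?_
      · intro ρ
        rw [Real.norm_eq_abs, abs_mul]
        exact mul_le_mul_of_nonneg_right (hw'bd ρ) (abs_nonneg _)
      · simpa using (hθ₀'top.abs.const_mul M)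
    have h2 : Tendsto (fun ρ => w ρ * deriv (deriv θ₀) ρ) atTop (𝓝 0) := by
      refine squeeze_zero_norm (a := fun ρ => M * |deriv (deriv θ₀) ρ|) ?_ ?_
      · intro ρ
        rw [Real.norm_eq_abs, abs_mul]
        exact mul_le_mul_of_nonneg_right (hwbd ρ) (abs_nonneg _)
      · simpa using (hθ₀''top.abs.const_mul M)
    simpa using h1.sub h2
  have hgbot : Tendsto g atBot (𝓝 0) := by
    have h1 : Tendsto (fun ρ => deriv w ρ * deriv θ₀ ρ) atBot (𝓝 0) := by
      refine squeeze_zero_norm (a := fun ρ => M * |deriv θ₀ ρ|) ?_ ?_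
      · intro ρ
        rw [Real.norm_eq_abs, abs_mul]
        exact mul_le_mul_of_nonneg_right (hw'bd ρ) (abs_nonneg _)
      · simpa using (hθ₀'bot.abs.const_mul M)
    have h2 : Tendsto (fun ρ => w ρ * deriv (deriv θ₀) ρ) atBot (𝓝 0) := by
      refine squeeze_zero_norm (a := fun ρ => M * |deriv (deriv θ₀) ρ|) ?_ ?_
      · intro ρ
        rw [Real.norm_eq_abs, abs_mul]
        exact mul_le_mul_of_nonneg_right (hwbd ρ) (abs_nonneg _)
      · simpa using (hθ₀''bot.abs.const_mul M)
    simpa using h1.sub h2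
  -- combine
  have hint : Integrable fun z : ℝ => -α * (deriv θ₀ z)^2 := hθ₀'L2.const_mul _
  have hlim1 : Tendsto (fun R : ℝ => ∫ ρ in (-R)..R, -α * (deriv θ₀ ρ)^2) atTop
      (𝓝 (∫ z : ℝ, -α * (deriv θ₀ z)^2)) :=
    intervalIntegral_tendsto_integral hint tendsto_neg_atTop_atBot tendsto_id
  have hlim2 : Tendsto (fun R : ℝ => ∫ ρ in (-R)..R, -α * (deriv θ₀ ρ)^2) atTop (𝓝 0) := by
    have : Tendsto (fun R : ℝ => g R - g (-R)) atTop (𝓝 (0 - 0)) :=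
      (hgtop.comp tendsto_id).sub (hgbot.comp tendsto_neg_atTop_atBot)
    have hEq : (fun R : ℝ => ∫ ρ in (-R)..R, -α * (deriv θ₀ ρ)^2)
        = fun R : ℝ => g R - g (-R) := funext hFTC
    rw [hEq]
    simpa using this
  have hzero : (∫ z : ℝ, -α * (deriv θ₀ z)^2) = 0 := tendsto_nhds_unique hlim1 hlim2
  rw [integral_const_mul] at hzero
  rcases mul_eq_zero.mp hzero with h | h
  · linarith
  · exact absurd h (ne_of_gt hθ₀'L2pos)
end
end
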